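/- arXiv:1708.08336 — 2 statements merged into one kernel-verified Lean document; each statement's English description precedes it below -/
import Mathlib

section
/- Let H be a complex Hilbert space and let X₁, X₂ be closed subspaces of H. Suppose Y and Y' are two finite-dimensional subspaces of H such that X₁ ∩ Y = {0}, X₁ ∩ Y' = {0}, X₂ ⊆ X₁ + Y, X₂ ⊆ X₁ + Y', and both quotient spaces (X₁ + Y)/X₂ and (X₁ + Y')/X₂ are finite-dimensional. Then, as integers, dim((X₁ + Y)/X₂) − dim Y = dim((X₁ + Y')/X₂) − dim Y'. In other words, the relative index [X₁, X₂] := dim((X₁ ⊕ Y)/X₂) − dim Y is independent of the choice of the finite-dimensional subspace Y. -/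
open Module Submodule LinearMap

section Aux

variable {K : Type*} [Field K] {M : Type*} [AddCommGroup M] [Module K M]

/-- If both `S` and `V ⧸ S` are finite dimensional, so is `V`. -/
lemma aux_fd_of_fd_quotient (S : Submodule K M) [FiniteDimensional K S]
    [FiniteDimensional K (M ⧸ S)] : FiniteDimensional K M := by
  obtain ⟨q, hq⟩ := S.exists_isCompl
  have e2 : (M ⧸ S) ≃ₗ[K] q := Submodule.quotientEquivOfIsCompl S q hq
  have : FiniteDimensional K q := e2.finiteDimensional
  exact (Submodule.prodEquivOfIsCompl S q hq).finiteDimensional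

/-- The natural map from `F` onto `(B ⊔ F) ⧸ B`. -/
noncomputable def supQuotMap (B F : Submodule K M) :
    F →ₗ[K] ((B ⊔ F : Submodule K M) ⧸ B.comap (B ⊔ F).subtype) :=
  (B.comap (B ⊔ F).subtype).mkQ.comp (Submodule.inclusion le_sup_right)

lemma supQuotMap_surjective (B F : Submodule K M) :
    Function.Surjective (supQuotMap B F) := by
  intro q
  obtain ⟨⟨x, hx⟩, rfl⟩ := Submodule.mkQ_surjective _ q
  obtain ⟨b, hb, f, hf, rfl⟩ := Submodule.mem_sup.mp hx
  refine ⟨⟨f, hf⟩, ?_⟩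
  simp only [supQuotMap, LinearMap.comp_apply, Submodule.mkQ_apply]
  rw [Submodule.Quotient.eq]
  have : ((Submodule.inclusion (le_sup_right : F ≤ B ⊔ F) ⟨f, hf⟩ : (B ⊔ F : Submodule K M))
      - ⟨b + f, hx⟩ : (B ⊔ F : Submodule K M)) = ⟨-b, by
        exact Submodule.neg_mem _ (Submodule.mem_sup_left hb)⟩ := by
    ext
    simp [Submodule.inclusion]
  rw [this]
  simpa using Submodule.neg_mem _ hb

lemma supQuotMap_finiteDimensional (B F : Submodule K M) [FiniteDimensional K F] :
    FiniteDimensional K ((B ⊔ F : Submodule K M) ⧸ B.comap (B ⊔ F).subtype) :=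
  Module.Finite.of_surjective (supQuotMap B F) (supQuotMap_surjective B F)

lemma supQuotMap_injective (B F : Submodule K M) (h : B ⊓ F = ⊥) :
    Function.Injective (supQuotMap B F) := by
  rw [← LinearMap.ker_eq_bot]
  rw [eq_bot_iff]
  rintro ⟨x, hxF⟩ hx
  simp only [supQuotMap, LinearMap.mem_ker, LinearMap.comp_apply, Submodule.mkQ_apply,
    Submodule.Quotient.mk_eq_zero, Submodule.mem_comap] at hx
  have hxB : x ∈ B := hx
  have : x ∈ B ⊓ F := ⟨hxB, hxF⟩
  rw [h] at this
  simpa using this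

lemma finrank_sup_quot (B F : Submodule K M) (h : B ⊓ F = ⊥) :
    Module.finrank K ((B ⊔ F : Submodule K M) ⧸ B.comap (B ⊔ F).subtype)
      = Module.finrank K F :=
  (LinearEquiv.ofBijective (supQuotMap B F)
    ⟨supQuotMap_injective B F h, supQuotMap_surjective B F⟩).symm.finrank_eq

/-- The natural map from `B` to `C ⧸ A` for `A ≤ B ≤ C`. -/
noncomputable def towerMap (A B C : Submodule K M) (hBC : B ≤ C) :
    B →ₗ[K] (C ⧸ A.comap C.subtype) :=
  (A.comap C.subtype).mkQ.comp (Submodule.inclusion hBC)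

lemma towerMap_ker (A B C : Submodule K M) (hBC : B ≤ C) :
    LinearMap.ker (towerMap A B C hBC) = A.comap B.subtype := by
  ext ⟨x, hx⟩
  simp [towerMap, Submodule.Quotient.mk_eq_zero, Submodule.inclusion]

/-- Equivalence `B ⧸ A ≃ range (towerMap A B C)`. -/
noncomputable def towerEquiv₁ (A B C : Submodule K M) (hBC : B ≤ C) :
    (B ⧸ A.comap B.subtype) ≃ₗ[K] LinearMap.range (towerMap A B C hBC) :=
  (Submodule.quotEquivOfEq _ _ (towerMap_ker A B C hBC).symm).trans
    (towerMap A B C hBC).quotKerEquivRange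

/-- The induced surjection `C ⧸ A → C ⧸ B`. -/
noncomputable def towerG (A B C : Submodule K M) (hAB : A ≤ B) :
    (C ⧸ A.comap C.subtype) →ₗ[K] (C ⧸ B.comap C.subtype) :=
  Submodule.liftQ _ (B.comap C.subtype).mkQ
    (by rw [Submodule.ker_mkQ]; exact Submodule.comap_mono hAB)

lemma towerG_surjective (A B C : Submodule K M) (hAB : A ≤ B) :
    Function.Surjective (towerG A B C hAB) := by
  intro q
  obtain ⟨x, rfl⟩ := Submodule.mkQ_surjective _ q
  exact ⟨(A.comap C.subtype).mkQ x, rfl⟩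

lemma towerG_ker (A B C : Submodule K M) (hAB : A ≤ B) (hBC : B ≤ C) :
    LinearMap.ker (towerG A B C hAB) = LinearMap.range (towerMap A B C hBC) := by
  rw [towerG, Submodule.ker_liftQ, Submodule.ker_mkQ]
  rw [towerMap, LinearMap.range_comp, Submodule.range_inclusion]

/-- Additivity of finrank in a tower `A ≤ B ≤ C`. -/
lemma finrank_tower (A B C : Submodule K M) (hAB : A ≤ B) (hBC : B ≤ C)
    [FiniteDimensional K (C ⧸ A.comap C.subtype)] :
    Module.finrank K (C ⧸ A.comap C.subtype)
      = Module.finrank K (C ⧸ B.comap C.subtype)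
        + Module.finrank K (B ⧸ A.comap B.subtype) := by
  have e2 : ((C ⧸ A.comap C.subtype) ⧸ LinearMap.ker (towerG A B C hAB))
      ≃ₗ[K] (C ⧸ B.comap C.subtype) :=
    (towerG A B C hAB).quotKerEquivOfSurjective (towerG_surjective A B C hAB)
  have h1 := Submodule.finrank_quotient_add_finrank (LinearMap.ker (towerG A B C hAB))
  rw [e2.finrank_eq] at h1
  have h2 : Module.finrank K (LinearMap.ker (towerG A B C hAB))
      = Module.finrank K (B ⧸ A.comap B.subtype) := by
    rw [towerG_ker A B C hAB hBC]
    exact (towerEquiv₁ A B C hBC).symm.finrank_eq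
  omega

/-- Finite-dimensionality of `C ⧸ A` from the tower. -/
lemma fd_tower (A B C : Submodule K M) (hAB : A ≤ B) (hBC : B ≤ C)
    [FiniteDimensional K (C ⧸ B.comap C.subtype)]
    [FiniteDimensional K (B ⧸ A.comap B.subtype)] :
    FiniteDimensional K (C ⧸ A.comap C.subtype) := by
  have : FiniteDimensional K (LinearMap.ker (towerG A B C hAB)) := by
    rw [towerG_ker A B C hAB hBC]
    exact (towerEquiv₁ A B C hBC).finiteDimensional
  have e2 : ((C ⧸ A.comap C.subtype) ⧸ LinearMap.ker (towerG A B C hAB))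
      ≃ₗ[K] (C ⧸ B.comap C.subtype) :=
    (towerG A B C hAB).quotKerEquivOfSurjective (towerG_surjective A B C hAB)
  have : FiniteDimensional K ((C ⧸ A.comap C.subtype) ⧸ LinearMap.ker (towerG A B C hAB)) :=
    e2.symm.finiteDimensional
  exact aux_fd_of_fd_quotient (LinearMap.ker (towerG A B C hAB))

/-- The key computation: with `W ⊇ X₁ ⊔ Y = Z ⊇ X₂`, the relative index equals
`dim(W/X₂) - dim(W/X₁)`. -/
lemma key_step (X₁ X₂ Y W : Submodule K M) [FiniteDimensional K Y]
    (hY : X₁ ⊓ Y = ⊥) (hsub : X₂ ≤ X₁ ⊔ Y) (hZW : X₁ ⊔ Y ≤ W)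
    [FiniteDimensional K ((X₁ ⊔ Y : Submodule K M) ⧸ X₂.comap (X₁ ⊔ Y).subtype)]
    [FiniteDimensional K (W ⧸ (X₁ ⊔ Y).comap W.subtype)] :
    (Module.finrank K ((X₁ ⊔ Y : Submodule K M) ⧸ X₂.comap (X₁ ⊔ Y).subtype) : ℤ)
        - Module.finrank K Y
      = (Module.finrank K (W ⧸ X₂.comap W.subtype) : ℤ)
        - Module.finrank K (W ⧸ X₁.comap W.subtype) := by
  set Z := X₁ ⊔ Y with hZ
  have hX₁Z : X₁ ≤ Z := le_sup_left
  have hfr : Module.finrank K (Z ⧸ X₁.comap Z.subtype) = Module.finrank K Y :=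
    finrank_sup_quot X₁ Y hY
  have fdZX₁ : FiniteDimensional K (Z ⧸ X₁.comap Z.subtype) :=
    supQuotMap_finiteDimensional X₁ Y
  have fd2 : FiniteDimensional K (W ⧸ X₂.comap W.subtype) :=
    fd_tower X₂ Z W hsub hZW
  have fd1 : FiniteDimensional K (W ⧸ X₁.comap W.subtype) :=
    fd_tower X₁ Z W hX₁Z hZW
  have t2 := finrank_tower X₂ Z W hsub hZW
  have t1 := finrank_tower X₁ Z W hX₁Z hZW
  rw [hfr] at t1
  omega

end Aux

/-- The relative index `[X₁, X₂]` of two closed subspaces of a Hilbert space is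
independent of the choice of the finite-dimensional subspace `Y`. -/
theorem relative_index_well_defined
    {H : Type*} [NormedAddCommGroup H] [InnerProductSpace ℂ H] [CompleteSpace H]
    (X₁ X₂ : Submodule ℂ H)
    (hX₁ : IsClosed (X₁ : Set H)) (hX₂ : IsClosed (X₂ : Set H))
    (Y Y' : Submodule ℂ H) [FiniteDimensional ℂ Y] [FiniteDimensional ℂ Y']
    (hY : X₁ ⊓ Y = ⊥) (hY' : X₁ ⊓ Y' = ⊥)
    (hsub : X₂ ≤ X₁ ⊔ Y) (hsub' : X₂ ≤ X₁ ⊔ Y')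
    [FiniteDimensional ℂ ((X₁ ⊔ Y : Submodule ℂ H) ⧸ X₂.comap (X₁ ⊔ Y).subtype)]
    [FiniteDimensional ℂ ((X₁ ⊔ Y' : Submodule ℂ H) ⧸ X₂.comap (X₁ ⊔ Y').subtype)] :
    (Module.finrank ℂ ((X₁ ⊔ Y : Submodule ℂ H) ⧸ X₂.comap (X₁ ⊔ Y).subtype) : ℤ)
        - Module.finrank ℂ Y
      = (Module.finrank ℂ ((X₁ ⊔ Y' : Submodule ℂ H) ⧸ X₂.comap (X₁ ⊔ Y').subtype) : ℤ)
        - Module.finrank ℂ Y' := by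
  set W : Submodule ℂ H := (X₁ ⊔ Y) ⊔ Y' with hW
  have hW1 : (X₁ ⊔ Y) ⊔ Y' = (X₁ ⊔ Y') ⊔ Y := by
    rw [sup_assoc, sup_assoc, sup_comm Y Y']
  have hZW : X₁ ⊔ Y ≤ W := le_sup_left
  have hZW' : X₁ ⊔ Y' ≤ W := by rw [hW, hW1]; exact le_sup_left
  have fdWZ : FiniteDimensional ℂ (W ⧸ (X₁ ⊔ Y).comap W.subtype) := by
    rw [hW]; exact supQuotMap_finiteDimensional (X₁ ⊔ Y) Y'
  have fdWZ' : FiniteDimensional ℂ (W ⧸ (X₁ ⊔ Y').comap W.subtype) := by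
    rw [hW, hW1]; exact supQuotMap_finiteDimensional (X₁ ⊔ Y') Y
  rw [key_step X₁ X₂ Y W hY hsub hZW, key_step X₁ X₂ Y' W hY' hsub' hZW']
end

section
/- Let H be a complex Hilbert space and let X₁, X₂ be closed subspaces of H. Suppose there exists a finite-dimensional subspace Y ⊆ H with X₁ ∩ Y = {0} such that X₂ ⊆ X₁ + Y and the quotient (X₁ + Y)/X₂ is finite-dimensional. Then there also exists a finite-dimensional subspace Z ⊆ H with X₂ ∩ Z = {0} such that X₁ ⊆ X₂ + Z and the quotient (X₂ + Z)/X₁ is finite-dimensional; that is, the relation 'X₂ is a finite rank perturbation of X₁' is symmetric. Moreover Z can be chosen so that dim((X₂ + Z)/X₁) − dim Z = dim Y − dim((X₁ + Y)/X₂), i.e., [X₂, X₁] = −[X₁, X₂]. -/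
/-- The relation "`X₂` is a finite rank perturbation of `X₁`" is symmetric, and the
relative index changes sign when the subspaces are interchanged:
`[X₂, X₁] = -[X₁, X₂]`. -/
theorem finite_rank_perturbation_symm
    {H : Type*} [NormedAddCommGroup H] [InnerProductSpace ℂ H] [CompleteSpace H]
    (X₁ X₂ : Submodule ℂ H)
    (hX₁ : IsClosed (X₁ : Set H)) (hX₂ : IsClosed (X₂ : Set H))
    (Y : Submodule ℂ H) [FiniteDimensional ℂ Y]
    (hY : X₁ ⊓ Y = ⊥) (hsub : X₂ ≤ X₁ ⊔ Y)
    [FiniteDimensional ℂ ((X₁ ⊔ Y : Submodule ℂ H) ⧸ X₂.comap (X₁ ⊔ Y).subtype)] :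
    ∃ Z : Submodule ℂ H, FiniteDimensional ℂ Z ∧ X₂ ⊓ Z = ⊥ ∧ X₁ ≤ X₂ ⊔ Z ∧
      ∃ _ : FiniteDimensional ℂ ((X₂ ⊔ Z : Submodule ℂ H) ⧸ X₁.comap (X₂ ⊔ Z).subtype),
        (Module.finrank ℂ ((X₂ ⊔ Z : Submodule ℂ H) ⧸ X₁.comap (X₂ ⊔ Z).subtype) : ℤ)
            - Module.finrank ℂ Z
          = (Module.finrank ℂ Y : ℤ)
            - Module.finrank ℂ ((X₁ ⊔ Y : Submodule ℂ H) ⧸ X₂.comap (X₁ ⊔ Y).subtype) := by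
  classical
  set W : Submodule ℂ H := X₁ ⊔ Y with hWdef
  obtain ⟨C, hC⟩ := Submodule.exists_isCompl (X₂.comap W.subtype)
  -- C is a complement of X₂ inside W
  have eC : (W ⧸ X₂.comap W.subtype) ≃ₗ[ℂ] C :=
    Submodule.quotientEquivOfIsCompl _ _ hC
  have eCmap : C ≃ₗ[ℂ] C.map W.subtype :=
    Submodule.equivMapOfInjective W.subtype (Submodule.injective_subtype W) C
  have hfinC : FiniteDimensional ℂ C := Module.Finite.equiv eC
  have hfinZ : FiniteDimensional ℂ (C.map W.subtype) := Module.Finite.equiv eCmap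
  have hrankZ : Module.finrank ℂ (C.map W.subtype)
      = Module.finrank ℂ (W ⧸ X₂.comap W.subtype) := by
    rw [← eCmap.finrank_eq, eC.finrank_eq]
  have hsup : X₂ ⊔ C.map W.subtype = W := by
    have h1 : (X₂.comap W.subtype ⊔ C).map W.subtype = (⊤ : Submodule ℂ W).map W.subtype := by
      rw [hC.sup_eq_top]
    rw [Submodule.map_sup, Submodule.map_comap_subtype, Submodule.map_subtype_top,
      inf_eq_right.mpr hsub] at h1
    exact h1
  refine ⟨C.map W.subtype, hfinZ, ?_, ?_, ?_⟩
  · -- X₂ ⊓ Z = ⊥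
    rw [eq_bot_iff]
    rintro x ⟨hx2, hxZ⟩
    obtain ⟨c, hcC, rfl⟩ := hxZ
    have : c ∈ X₂.comap W.subtype ⊓ C := ⟨hx2, hcC⟩
    rw [hC.inf_eq_bot] at this
    simpa using this
  · rw [hsup]; exact le_sup_left
  · rw [hsup]
    -- W ⧸ X₁ ≅ Y
    have hcompl : IsCompl (X₁.comap W.subtype) (Y.comap W.subtype) := by
      constructor
      · rw [disjoint_iff, eq_bot_iff]
        rintro x ⟨hx1, hxY⟩
        have : (x : H) ∈ X₁ ⊓ Y := ⟨hx1, hxY⟩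
        rw [hY] at this
        simpa using this
      · rw [codisjoint_iff, eq_top_iff]
        intro x _
        have hx : (x : H) ∈ X₁ ⊔ Y := x.2
        rw [Submodule.mem_sup] at hx
        obtain ⟨a, ha, b, hb, hab⟩ := hx
        have haW : a ∈ W := Submodule.mem_sup_left ha
        have hbW : b ∈ W := Submodule.mem_sup_right hb
        rw [Submodule.mem_sup]
        refine ⟨⟨a, haW⟩, ha, ⟨b, hbW⟩, hb, ?_⟩
        ext; exact hab
    have eQ : (W ⧸ X₁.comap W.subtype) ≃ₗ[ℂ] Y.comap W.subtype :=
      Submodule.quotientEquivOfIsCompl _ _ hcompl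
    have eY : Y.comap W.subtype ≃ₗ[ℂ] Y :=
      Submodule.comapSubtypeEquivOfLe le_sup_right
    have hfinQ : FiniteDimensional ℂ (W ⧸ X₁.comap W.subtype) :=
      Module.Finite.equiv (eY.symm.trans eQ.symm)
    refine ⟨hfinQ, ?_⟩
    have hrankQ : Module.finrank ℂ (W ⧸ X₁.comap W.subtype) = Module.finrank ℂ Y := by
      rw [eQ.finrank_eq, eY.finrank_eq]
    rw [hrankQ, hrankZ]
end
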